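/- arXiv:2104.13967 — 2 statements merged into one kernel-verified Lean document; each statement's English description precedes it below -/
import Mathlib

section
/- For any w ∈ W^{1,p}(0,T;X) ∩ W^{2,1}(0,T;X) with X a Banach space and 1 ≤ p < ∞, the Caputo derivative D_t^α w converges to w_t in L^p(0,T;X) as α → 1⁻. -/
/-!
Writing `w_t(s) = w_t(0) + ∫₀ˢ w_tt` and exchanging the order of integration turns the Caputo
derivative into the closed form
`D_t^α w(t) = Γ(2-α)⁻¹ (t^{1-α} w_t(0) + ∫₀ᵗ (t-r)^{1-α} w_tt(r) dr)`.
As `α → 1⁻` this tends to `w_t(0) + ∫₀ᵗ w_tt = w_t(t)` for every `t > 0`, and, since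
`x^{1-α} ≤ max 1 x`, it is bounded uniformly in `t ∈ [0,T]` and `α` near `1`.
Dominated convergence on the finite interval then gives convergence in `L^p`.
-/

open MeasureTheory Set Filter

/-- Caputo fractional derivative of order `α ∈ (0,1)` of an `X`-valued function,
expressed through its derivative `w'`. -/
noncomputable def caputoDeriv {X : Type*} [NormedAddCommGroup X] [NormedSpace ℝ X]
    (α : ℝ) (w' : ℝ → X) (t : ℝ) : X :=
  (Real.Gamma (1 - α))⁻¹ • ∫ s in (0:ℝ)..t, ((t - s) ^ (-α) : ℝ) • w' s

open Topology

theorem Real.rpow_le_max_one_self {x β : ℝ} (hx : 0 ≤ x) (hβ₀ : 0 ≤ β) (hβ₁ : β ≤ 1) :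
    x ^ β ≤ max 1 x := by
  rcases le_total x 1 with h | h
  · exact le_max_of_le_left (Real.rpow_le_one hx h hβ₀)
  · exact le_max_of_le_right (by simpa using Real.rpow_le_rpow_of_exponent_le h hβ₁)

theorem Real.tendsto_const_rpow_nhdsGT_zero {b : ℝ} (hb : b ≠ 0) :
    Tendsto (fun β : ℝ => b ^ β) (𝓝[>] 0) (𝓝 1) := by
  simpa using (Real.continuousAt_const_rpow (b := 0) hb).tendsto.mono_left nhdsWithin_le_nhds

theorem tendsto_one_sub_nhdsLT_one : Tendsto (fun α : ℝ => 1 - α) (𝓝[<] 1) (𝓝[>] 0) := by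
  refine tendsto_nhdsWithin_of_tendsto_nhds_of_eventually_within _ ?_ ?_
  · exact ((continuous_sub_left 1).tendsto' 1 0 (sub_self 1)).mono_left nhdsWithin_le_nhds
  · filter_upwards [self_mem_nhdsWithin] with α hα using sub_pos.2 (mem_Iio.1 hα)

theorem Real.tendsto_inv_Gamma_two_sub :
    Tendsto (fun α => (Real.Gamma (2 - α))⁻¹) (𝓝[<] 1) (𝓝 1) := by
  have hΓ : ContinuousAt Real.Gamma 1 := (Real.differentiableAt_Gamma fun m => by
    linarith [(m.cast_nonneg : (0 : ℝ) ≤ m)]).continuousAt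
  have h2 : Tendsto (fun α : ℝ => 2 - α) (𝓝[<] 1) (𝓝 1) :=
    ((continuous_sub_left 2).tendsto' 1 1 (by norm_num)).mono_left nhdsWithin_le_nhds
  simpa using (hΓ.tendsto.comp h2).inv₀ (by simp)

theorem Real.Gamma_two_sub {α : ℝ} (hα : α < 1) :
    Real.Gamma (2 - α) = (1 - α) * Real.Gamma (1 - α) := by
  rw [show 2 - α = (1 - α) + 1 by ring, Real.Gamma_add_one (by linarith)]

theorem integral_sub_rpow {γ : ℝ} (hγ : -1 < γ) (r t : ℝ) :
    ∫ s in r..t, (t - s) ^ γ = (t - r) ^ (γ + 1) / (γ + 1) := by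
  rw [intervalIntegral.integral_comp_sub_left (fun u => u ^ γ), sub_self,
    integral_rpow (Or.inl hγ), Real.zero_rpow (by linarith), sub_zero]

theorem intervalIntegrable_sub_rpow {γ : ℝ} (hγ : -1 < γ) (t a b : ℝ) :
    IntervalIntegrable (fun s => (t - s) ^ γ) volume a b := by
  simpa using
    (intervalIntegral.intervalIntegrable_rpow' hγ (a := t - a) (b := t - b)).comp_sub_left t

theorem tendsto_integral_norm_sub_rpow_of_tendsto {ι α E : Type*} [MeasurableSpace α]
    {μ : Measure α} [IsFiniteMeasure μ] [NormedAddCommGroup E] {l : Filter ι}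
    [l.IsCountablyGenerated] {F : ι → α → E} {f : α → E} {C p : ℝ} (hp : 0 < p)
    (hF : ∀ᶠ i in l, AEStronglyMeasurable (F i) μ) (hf : AEStronglyMeasurable f μ)
    (hbound : ∀ᶠ i in l, ∀ᵐ x ∂μ, ‖F i x - f x‖ ≤ C)
    (hlim : ∀ᵐ x ∂μ, Tendsto (fun i => F i x) l (𝓝 (f x))) :
    Tendsto (fun i => ∫ x, ‖F i x - f x‖ ^ p ∂μ) l (𝓝 0) := by
  simpa using tendsto_integral_filter_of_dominated_convergence (μ := μ) (l := l)
    (F := fun i x => ‖F i x - f x‖ ^ p) (f := fun _ => 0) (fun _ => C ^ p)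
    (hF.mono fun i hi => ((hi.sub hf).norm.aemeasurable.pow_const p).aestronglyMeasurable)
    (hbound.mono fun i hi => hi.mono fun x hx => by
      rw [Real.norm_of_nonneg (by positivity)]
      exact Real.rpow_le_rpow (norm_nonneg _) hx hp.le)
    (integrable_const _)
    (hlim.mono fun x hx => by
      simpa [Real.zero_rpow hp.ne'] using
        (tendsto_iff_norm_sub_tendsto_zero.1 hx).rpow_const (p := p) (Or.inr hp.le))

section

variable {X : Type*} [NormedAddCommGroup X] [NormedSpace ℝ X]

theorem integral_smul_primitive_swap [CompleteSpace X] {k : ℝ → ℝ} {f : ℝ → X} {a b : ℝ}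
    (hab : a ≤ b) (hk : IntegrableOn k (Ioc a b)) (hf : IntegrableOn f (Ioc a b)) :
    ∫ s in a..b, k s • ∫ r in a..s, f r = ∫ r in a..b, (∫ s in r..b, k s) • f r := by
  set μ := volume.restrict (Ioc a b)
  set F : ℝ × ℝ → X := {q | q.2 ≤ q.1}.indicator fun q => k q.1 • f q.2
  have hF : Integrable F (μ.prod μ) :=
    (hk.smul_prod hf).indicator (measurableSet_le measurable_snd measurable_fst)
  have inner_left : ∀ s ∈ Ioc a b, ∫ r, F (s, r) ∂μ = k s • ∫ r in a..s, f r := by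
    intro s hs
    have : (fun r => F (s, r)) = (Iic s).indicator fun r => k s • f r := by
      ext r; by_cases h : r ≤ s <;> simp [F, h]
    rw [this, integral_indicator measurableSet_Iic, Measure.restrict_restrict measurableSet_Iic,
      Iic_inter_Ioc_of_le hs.2, integral_smul, intervalIntegral.integral_of_le hs.1.le]
  have inner_right : ∀ r ∈ Ioc a b, ∫ s, F (s, r) ∂μ = (∫ s in r..b, k s) • f r := by
    intro r hr
    have : (fun s => F (s, r)) = (Ici r).indicator fun s => k s • f r := by
      ext s; by_cases h : r ≤ s <;> simp [F, h]
    rw [this, integral_indicator measurableSet_Ici, Measure.restrict_restrict measurableSet_Ici,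
      show Ici r ∩ Ioc a b = Icc r b by grind, integral_smul_const, integral_Icc_eq_integral_Ioc,
      intervalIntegral.integral_of_le hr.2]
  calc ∫ s in a..b, k s • ∫ r in a..s, f r = ∫ s, ∫ r, F (s, r) ∂μ ∂μ := by
        rw [intervalIntegral.integral_of_le hab]
        exact (setIntegral_congr_fun measurableSet_Ioc inner_left).symm
    _ = ∫ r, ∫ s, F (s, r) ∂μ ∂μ := integral_integral_swap hF
    _ = ∫ r in a..b, (∫ s in r..b, k s) • f r := by
        rw [intervalIntegral.integral_of_le hab]
        exact setIntegral_congr_fun measurableSet_Ioc inner_right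

theorem aestronglyMeasurable_integral_kernel_smul {k : ℝ → ℝ → ℝ}
    (hk : Measurable (Function.uncurry k)) {f : ℝ → X} {a b : ℝ}
    (hf : AEStronglyMeasurable f (volume.restrict (Ioc a b))) :
    AEStronglyMeasurable (fun t => ∫ r in a..t, k t r • f r) (volume.restrict (Ioc a b)) := by
  set μ := volume.restrict (Ioc a b)
  set G : ℝ × ℝ → X := {q | q.2 ≤ q.1}.indicator fun q => k q.1 q.2 • f q.2
  have hG : AEStronglyMeasurable G (μ.prod μ) :=
    (hk.aestronglyMeasurable.smul hf.comp_snd).indicator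
      (measurableSet_le measurable_snd measurable_fst)
  refine hG.integral_prod_right'.congr ((ae_restrict_iff' measurableSet_Ioc).2 <|
    ae_of_all _ fun t ht => ?_)
  show _ = ∫ r in a..t, k t r • f r
  rw [← intervalIntegral.integral_indicator ⟨ht.1.le, ht.2⟩,
    intervalIntegral.integral_of_le (ht.1.le.trans ht.2)]
  -- the slice at `t` of the indicator of the triangle `r ≤ t` is the indicator of `Iic t`
  rfl

theorem tendsto_integral_sub_rpow_smul {t : ℝ} (ht : 0 ≤ t) {f : ℝ → X}
    (hf : IntervalIntegrable f volume 0 t) :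
    Tendsto (fun β : ℝ => ∫ r in 0..t, (t - r) ^ β • f r) (𝓝[>] 0)
      (𝓝 (∫ r in 0..t, f r)) := by
  refine intervalIntegral.tendsto_integral_filter_of_dominated_convergence
    (fun r => max 1 t * ‖f r‖) ?_ ?_ (hf.norm.const_mul _) ?_
  · exact Eventually.of_forall fun β =>
      (by fun_prop : Measurable fun r : ℝ => (t - r) ^ β).aestronglyMeasurable.smul
        hf.def'.aestronglyMeasurable
  · filter_upwards [Ioo_mem_nhdsGT one_pos] with β hβ
    refine ae_of_all _ fun r hr => ?_
    rw [uIoc_of_le ht] at hr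
    rw [norm_smul, Real.norm_of_nonneg (Real.rpow_nonneg (by linarith [hr.2]) _)]
    gcongr
    exact (Real.rpow_le_max_one_self (by linarith [hr.2]) hβ.1.le hβ.2.le).trans
      (max_le_max le_rfl (by linarith [hr.1]))
  · filter_upwards [Measure.ae_ne volume t] with r hrt hr
    rw [uIoc_of_le ht] at hr
    simpa using (Real.tendsto_const_rpow_nhdsGT_zero (sub_ne_zero.2 hrt.symm)).smul_const (f r)

theorem norm_integral_sub_rpow_smul_le {β t T : ℝ} (hβ₀ : 0 ≤ β) (hβ₁ : β ≤ 1)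
    (ht : t ∈ Icc 0 T) {f : ℝ → X} (hf : IntervalIntegrable f volume 0 T) :
    ‖∫ r in 0..t, (t - r) ^ β • f r‖ ≤ max 1 T * ∫ r in 0..T, ‖f r‖ := by
  have hfT := hf.norm.const_mul (max 1 T)
  calc ‖∫ r in 0..t, (t - r) ^ β • f r‖ ≤ ∫ r in 0..t, max 1 T * ‖f r‖ := by
        refine intervalIntegral.norm_integral_le_of_norm_le ht.1 (ae_of_all _ fun r hr => ?_)
          (hfT.mono_set (uIcc_subset_uIcc_left (mem_uIcc_of_le ht.1 ht.2)))
        rw [norm_smul, Real.norm_of_nonneg (Real.rpow_nonneg (by linarith [hr.2]) _)]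
        gcongr
        exact (Real.rpow_le_max_one_self (by linarith [hr.2]) hβ₀ hβ₁).trans
          (max_le_max le_rfl (by linarith [hr.1, ht.2]))
    _ ≤ ∫ r in 0..T, max 1 T * ‖f r‖ :=
        intervalIntegral.integral_mono_interval le_rfl ht.1 ht.2
          (ae_of_all _ fun r => by positivity) hfT
    _ = max 1 T * ∫ r in 0..T, ‖f r‖ := intervalIntegral.integral_const_mul _ _

section Caputo

variable [CompleteSpace X] {w' w'' : ℝ → X}

theorem caputoDeriv_eq {α t T : ℝ} (hα : α < 1) (ht : t ∈ Icc 0 T)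
    (hw' : ∀ s ∈ Icc 0 T, w' s = w' 0 + ∫ r in 0..s, w'' r)
    (hw'' : IntervalIntegrable w'' volume 0 T) :
    caputoDeriv α w' t = (Real.Gamma (2 - α))⁻¹ •
      ((t ^ (1 - α) : ℝ) • w' 0 + ∫ r in 0..t, (t - r) ^ (1 - α) • w'' r) := by
  have hγ : -1 < -α := by linarith
  have hk := intervalIntegrable_sub_rpow hγ t 0 t
  have hw''t := hw''.mono_set (uIcc_subset_uIcc_left (mem_uIcc_of_le ht.1 ht.2))
  have hprim : ContinuousOn (fun s => ∫ r in 0..s, w'' r) (uIcc 0 t) :=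
    intervalIntegral.continuousOn_primitive_interval' hw''t left_mem_uIcc
  have hkernel : ∀ r, ∫ s in r..t, (t - s) ^ (-α) = (1 - α)⁻¹ * (t - r) ^ (1 - α) := by
    intro r; rw [integral_sub_rpow hγ, neg_add_eq_sub, div_eq_inv_mul]
  calc caputoDeriv α w' t
      = (Real.Gamma (1 - α))⁻¹ • ∫ s in 0..t,
          ((t - s) ^ (-α) • w' 0 + (t - s) ^ (-α) • ∫ r in 0..s, w'' r) := by
        rw [caputoDeriv]
        congr 1
        refine intervalIntegral.integral_congr fun s hs => ?_
        rw [uIcc_of_le ht.1] at hs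
        simp only [hw' s ⟨hs.1, hs.2.trans ht.2⟩, smul_add]
    _ = (Real.Gamma (1 - α))⁻¹ • ((∫ s in 0..t, (t - s) ^ (-α)) • w' 0
          + ∫ r in 0..t, (∫ s in r..t, (t - s) ^ (-α)) • w'' r) := by
        rw [intervalIntegral.integral_add (hk.smul_continuousOn continuousOn_const)
            (hk.smul_continuousOn hprim), intervalIntegral.integral_smul_const,
          integral_smul_primitive_swap ht.1 hk.1 hw''t.1]
    _ = _ := by
        simp_rw [hkernel, mul_smul, intervalIntegral.integral_smul, ← smul_add, smul_smul,
          Real.Gamma_two_sub hα, mul_inv, mul_comm, sub_zero]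

theorem aestronglyMeasurable_caputoDeriv {α T : ℝ} (hα : α < 1)
    (hw' : ∀ s ∈ Icc 0 T, w' s = w' 0 + ∫ r in 0..s, w'' r)
    (hw'' : IntervalIntegrable w'' volume 0 T) :
    AEStronglyMeasurable (caputoDeriv α w') (volume.restrict (Ioc 0 T)) := by
  refine AEStronglyMeasurable.congr ?_ ((ae_restrict_iff' measurableSet_Ioc).2 <|
    ae_of_all _ fun t ht => (caputoDeriv_eq hα (Ioc_subset_Icc_self ht) hw' hw'').symm)
  have hpow : Measurable fun t : ℝ => t ^ (1 - α) := by fun_prop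
  exact aestronglyMeasurable_const.smul <|
    (hpow.aestronglyMeasurable.smul aestronglyMeasurable_const).add <|
      aestronglyMeasurable_integral_kernel_smul (by fun_prop) hw''.1.aestronglyMeasurable

theorem tendsto_caputoDeriv {t T : ℝ} (ht : t ∈ Ioc 0 T)
    (hw' : ∀ s ∈ Icc 0 T, w' s = w' 0 + ∫ r in 0..s, w'' r)
    (hw'' : IntervalIntegrable w'' volume 0 T) :
    Tendsto (fun α => caputoDeriv α w' t) (𝓝[<] 1) (𝓝 (w' t)) := by
  have hw''t := hw''.mono_set (uIcc_subset_uIcc_left (mem_uIcc_of_le ht.1.le ht.2))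
  have hlim := Real.tendsto_inv_Gamma_two_sub.smul <|
    (((Real.tendsto_const_rpow_nhdsGT_zero ht.1.ne').comp tendsto_one_sub_nhdsLT_one).smul_const
      (w' 0)).add ((tendsto_integral_sub_rpow_smul ht.1.le hw''t).comp tendsto_one_sub_nhdsLT_one)
  rw [one_smul, one_smul, ← hw' t (Ioc_subset_Icc_self ht)] at hlim
  refine hlim.congr' ?_
  filter_upwards [self_mem_nhdsWithin] with α hα
  exact (caputoDeriv_eq hα (Ioc_subset_Icc_self ht) hw' hw'').symm

theorem eventually_norm_caputoDeriv_le {T : ℝ}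
    (hw' : ∀ s ∈ Icc 0 T, w' s = w' 0 + ∫ r in 0..s, w'' r)
    (hw'' : IntervalIntegrable w'' volume 0 T) :
    ∃ C, ∀ᶠ α in 𝓝[<] 1, ∀ t ∈ Icc 0 T, ‖caputoDeriv α w' t‖ ≤ C := by
  refine ⟨2 * (max 1 T * ‖w' 0‖ + max 1 T * ∫ r in 0..T, ‖w'' r‖), ?_⟩
  filter_upwards [Ioo_mem_nhdsLT one_pos,
    Real.tendsto_inv_Gamma_two_sub.eventually (gt_mem_nhds one_lt_two)] with α hα hΓ t ht
  have hΓ₀ : 0 < (Real.Gamma (2 - α))⁻¹ :=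
    inv_pos.2 (Real.Gamma_pos_of_pos (by linarith [hα.2]))
  have hβ₀ : 0 ≤ 1 - α := by linarith [hα.2]
  have hβ₁ : 1 - α ≤ 1 := by linarith [hα.1]
  rw [caputoDeriv_eq hα.2 ht hw' hw'', norm_smul, Real.norm_of_nonneg hΓ₀.le]
  gcongr
  refine (norm_add_le _ _).trans
    (add_le_add ?_ (norm_integral_sub_rpow_smul_le hβ₀ hβ₁ ht hw''))
  rw [norm_smul, Real.norm_of_nonneg (Real.rpow_nonneg ht.1 _)]
  gcongr
  exact (Real.rpow_le_max_one_self ht.1 hβ₀ hβ₁).trans (max_le_max le_rfl ht.2)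

end Caputo

end

theorem caputo_tendsto_deriv_Lp_general {X : Type*} [NormedAddCommGroup X] [NormedSpace ℝ X]
    [CompleteSpace X] (T p : ℝ) (hT : 0 < T) (hp : 1 ≤ p)
    (w' w'' : ℝ → X)
    (hw' : ∀ t ∈ Set.Icc (0:ℝ) T, w' t = w' 0 + ∫ s in (0:ℝ)..t, w'' s)
    (hw'i : IntervalIntegrable w' volume 0 T)
    (hw''i : IntervalIntegrable w'' volume 0 T) :
    Filter.Tendsto
      (fun α : ℝ => (∫ t in (0:ℝ)..T, ‖caputoDeriv α w' t - w' t‖ ^ p) ^ (1/p))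
      (nhdsWithin 1 (Set.Iio (1:ℝ))) (nhds 0) := by
  have hp₀ : 0 < p := by linarith
  have hlim : ∀ t ∈ Ioc 0 T, Tendsto (fun α => caputoDeriv α w' t) (𝓝[<] 1) (𝓝 (w' t)) :=
    fun t ht => tendsto_caputoDeriv ht hw' hw''i
  obtain ⟨C, hC⟩ := eventually_norm_caputoDeriv_le hw' hw''i
  have hw'C : ∀ t ∈ Ioc 0 T, ‖w' t‖ ≤ C := fun t ht =>
    le_of_tendsto (hlim t ht).norm (hC.mono fun α hα => hα t (Ioc_subset_Icc_self ht))
  have hLp := tendsto_integral_norm_sub_rpow_of_tendsto (l := 𝓝[<] (1 : ℝ)) (C := C + C) hp₀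
    (eventually_mem_nhdsWithin.mono fun α hα => aestronglyMeasurable_caputoDeriv hα hw' hw''i)
    hw'i.1.aestronglyMeasurable
    (hC.mono fun α hα => (ae_restrict_iff' measurableSet_Ioc).2 <| ae_of_all _ fun t ht =>
      (norm_sub_le _ _).trans (add_le_add (hα t (Ioc_subset_Icc_self ht)) (hw'C t ht)))
    ((ae_restrict_iff' measurableSet_Ioc).2 <| ae_of_all _ hlim)
  simpa [intervalIntegral.integral_of_le hT.le, Real.zero_rpow (inv_pos.2 hp₀).ne'] using
    hLp.rpow_const (p := 1 / p) (Or.inr (by positivity))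

/-- For `w ∈ W^{1,p}(0,T;X) ∩ W^{2,1}(0,T;X)` (encoded: `w` is the integral of `w'`,
`w'` the integral of `w''`, with `w' ∈ L^p` and `w'' ∈ L^1`), the Caputo derivative
`D_t^α w` converges to `w_t` in `L^p(0,T;X)` as `α → 1⁻`. -/
theorem caputo_tendsto_deriv_Lp {X : Type*} [NormedAddCommGroup X] [NormedSpace ℝ X]
    [CompleteSpace X] (T p : ℝ) (hT : 0 < T) (hp : 1 ≤ p)
    (w w' w'' : ℝ → X)
    (hw : ∀ t ∈ Set.Icc (0:ℝ) T, w t = w 0 + ∫ s in (0:ℝ)..t, w' s)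
    (hw' : ∀ t ∈ Set.Icc (0:ℝ) T, w' t = w' 0 + ∫ s in (0:ℝ)..t, w'' s)
    (hw'i : IntervalIntegrable w' volume 0 T)
    (hw'p : IntervalIntegrable (fun t => ‖w' t‖ ^ p) volume 0 T)
    (hw''i : IntervalIntegrable w'' volume 0 T) :
    Filter.Tendsto
      (fun α : ℝ => (∫ t in (0:ℝ)..T, ‖caputoDeriv α w' t - w' t‖ ^ p) ^ (1/p))
      (nhdsWithin 1 (Set.Iio (1:ℝ))) (nhds 0) :=
  caputo_tendsto_deriv_Lp_general T p hT hp w' w'' hw' hw'i hw''i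
end

section
/- For any w ∈ W^{1,p}(0,T;X) with 1 ≤ p < ∞ and X a Banach space, the Caputo derivative D_t^α w converges to w - w(0) in L^p(0,T;X) as α → 0⁺; i.e., limsup_{α→0⁺} ‖D_t^α w - w + w(0)‖_{L^p(0,T;X)} = 0. -/
open MeasureTheory Set Filter
open scoped ENNReal Topology

theorem ENNReal.rpow_lintegral_mul_le {α : Type*} [MeasurableSpace α] {μ : Measure α}
    {f g : α → ℝ≥0∞} (hf : AEMeasurable f μ) (hg : AEMeasurable g μ) {p : ℝ} (hp : 1 ≤ p) :
    (∫⁻ a, f a * g a ∂μ) ^ p ≤ (∫⁻ a, f a ∂μ) ^ (p - 1) * ∫⁻ a, f a * g a ^ p ∂μ := by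
  have hp0 : 0 < p := by linarith
  have hq : 0 ≤ 1 - p⁻¹ := sub_nonneg.2 (inv_le_one_of_one_le₀ hp)
  -- Hölder with exponents `1/p`, `1 - 1/p` applied to `f g = (f g^p)^(1/p) f^(1-1/p)`.
  have holder := ENNReal.lintegral_mul_norm_pow_le (hf.mul (hg.pow_const p)) hf
    (inv_nonneg.2 hp0.le) hq (add_sub_cancel _ _)
  have factor : ∀ a, (f a * g a ^ p) ^ p⁻¹ * f a ^ (1 - p⁻¹) = f a * g a := fun a => by
    rw [ENNReal.mul_rpow_of_nonneg _ _ (inv_nonneg.2 hp0.le), ENNReal.rpow_rpow_inv hp0.ne',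
      mul_right_comm, ← ENNReal.rpow_add_of_nonneg _ _ (inv_nonneg.2 hp0.le) hq,
      add_sub_cancel, ENNReal.rpow_one]
  simp only [Pi.mul_apply, factor] at holder
  calc (∫⁻ a, f a * g a ∂μ) ^ p
      ≤ ((∫⁻ a, f a * g a ^ p ∂μ) ^ p⁻¹ * (∫⁻ a, f a ∂μ) ^ (1 - p⁻¹)) ^ p :=
        ENNReal.rpow_le_rpow holder hp0.le
    _ = (∫⁻ a, f a ∂μ) ^ (p - 1) * ∫⁻ a, f a * g a ^ p ∂μ := by
        rw [ENNReal.mul_rpow_of_nonneg _ _ hp0.le, ENNReal.rpow_inv_rpow hp0.ne',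
          ← ENNReal.rpow_mul, sub_mul, one_mul, inv_mul_cancel₀ hp0.ne', mul_comm]

theorem lintegral_lconvolution_rpow_le {G : Type*} [MeasurableSpace G] [AddGroup G]
    [MeasurableAdd₂ G] [MeasurableNeg G] {μ : Measure G} [SFinite μ] [μ.IsAddLeftInvariant]
    {f g : G → ℝ≥0∞} (hf : Measurable f) (hg : Measurable g) {p : ℝ} (hp : 1 ≤ p) :
    ∫⁻ x, (f ⋆ₗ[μ] g) x ^ p ∂μ ≤ (∫⁻ x, f x ∂μ) ^ p * ∫⁻ x, g x ^ p ∂μ := by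
  have hpointwise : ∀ x, (f ⋆ₗ[μ] g) x ^ p
      ≤ (∫⁻ y, f y ∂μ) ^ (p - 1) * ∫⁻ y, f y * g (-y + x) ^ p ∂μ := fun x =>
    ENNReal.rpow_lintegral_mul_le hf.aemeasurable (by fun_prop) hp
  calc ∫⁻ x, (f ⋆ₗ[μ] g) x ^ p ∂μ
      ≤ ∫⁻ x, (∫⁻ y, f y ∂μ) ^ (p - 1) * ∫⁻ y, f y * g (-y + x) ^ p ∂μ ∂μ :=
        lintegral_mono hpointwise
    _ = (∫⁻ y, f y ∂μ) ^ (p - 1) * ∫⁻ y, f y * ∫⁻ x, g (-y + x) ^ p ∂μ ∂μ := by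
        rw [lintegral_const_mul _ (by fun_prop), lintegral_lintegral_swap (by fun_prop)]
        congr 1
        refine lintegral_congr fun y => ?_
        rw [lintegral_const_mul _ (by fun_prop)]
    _ = (∫⁻ x, f x ∂μ) ^ p * ∫⁻ x, g x ^ p ∂μ := by
        simp_rw [lintegral_add_left_eq_self (fun x => g x ^ p), lintegral_mul_const _ hf,
          ← mul_assoc]
        congr 1
        conv_lhs => enter [2]; rw [← ENNReal.rpow_one (∫⁻ y, f y ∂μ)]
        rw [← ENNReal.rpow_add_of_nonneg _ _ (sub_nonneg.2 hp) zero_le_one, sub_add_cancel]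

theorem lintegral_Ioc_rpow_lintegral_Ioc_le {k g : ℝ → ℝ≥0∞} {T p : ℝ} (hk : Measurable k)
    (hg : AEMeasurable g (volume.restrict (Ioc 0 T))) (hp : 1 ≤ p) :
    ∫⁻ t in Ioc 0 T, (∫⁻ s in Ioc 0 t, k (t - s) * g s) ^ p
      ≤ (∫⁻ u in Ioc 0 T, k u) ^ p * ∫⁻ s in Ioc 0 T, g s ^ p := by
  set K := (Icc 0 T).indicator k
  set F := (Ioc 0 T).indicator (hg.mk g)
  have hK : Measurable K := hk.indicator measurableSet_Icc
  have hF : Measurable F := hg.measurable_mk.indicator measurableSet_Ioc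
  have hconv : ∀ t ∈ Ioc 0 T, ∫⁻ s in Ioc 0 t, k (t - s) * g s ≤ (K ⋆ₗ F) t := by
    intro t ht
    have hsub : Ioc 0 t ⊆ Ioc 0 T := Ioc_subset_Ioc_right ht.2
    calc ∫⁻ s in Ioc 0 t, k (t - s) * g s
        = ∫⁻ s in Ioc 0 t, F s * K (-s + t) := by
          refine lintegral_congr_ae ?_
          filter_upwards [ae_restrict_mem measurableSet_Ioc,
            ae_restrict_of_ae_restrict_of_subset hsub hg.ae_eq_mk] with s hst hs
          have : -s + t ∈ Icc 0 T := ⟨by linarith [hst.2], by linarith [hst.1, ht.2]⟩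
          simp only [F, K, indicator_of_mem (hsub hst), indicator_of_mem this, hs]
          rw [mul_comm, neg_add_eq_sub]
      _ ≤ ∫⁻ s, F s * K (-s + t) := setLIntegral_le_lintegral _ _
      _ = (K ⋆ₗ F) t := by rw [lconvolution_comm]; rfl
  have hKint : ∫⁻ x, K x = ∫⁻ u in Ioc 0 T, k u := by
    rw [lintegral_indicator measurableSet_Icc, setLIntegral_congr Ioc_ae_eq_Icc]
  have hFint : ∫⁻ x, F x ^ p = ∫⁻ s in Ioc 0 T, g s ^ p := by
    have hp0 : (0 : ℝ≥0∞) ^ p = 0 := ENNReal.zero_rpow_of_pos (by linarith)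
    have hcomp := indicator_comp_of_zero (s := Ioc 0 T) (f := hg.mk g)
      (g := fun x : ℝ≥0∞ => x ^ p) hp0
    change ∫⁻ x, ((fun x : ℝ≥0∞ => x ^ p) ∘ (Ioc 0 T).indicator (hg.mk g)) x = _
    rw [← hcomp, lintegral_indicator measurableSet_Ioc]
    exact lintegral_congr_ae (hg.ae_eq_mk.fun_comp _).symm
  calc ∫⁻ t in Ioc 0 T, (∫⁻ s in Ioc 0 t, k (t - s) * g s) ^ p
      ≤ ∫⁻ t in Ioc 0 T, (K ⋆ₗ F) t ^ p :=
        setLIntegral_mono' measurableSet_Ioc fun t ht =>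
          ENNReal.rpow_le_rpow (hconv t ht) (by linarith)
    _ ≤ ∫⁻ t, (K ⋆ₗ F) t ^ p := setLIntegral_le_lintegral _ _
    _ ≤ _ := hKint ▸ hFint ▸ lintegral_lconvolution_rpow_le hK hF hp

noncomputable def caputoKernel (α u : ℝ) : ℝ := (Real.Gamma (1 - α))⁻¹ * u ^ (-α)

@[fun_prop]
theorem measurable_caputoKernel (α : ℝ) : Measurable (caputoKernel α) := by
  unfold caputoKernel; fun_prop

theorem Real.rpow_neg_le_rpow_neg_add_one {u α β : ℝ} (hu : 0 < u) (hα : 0 ≤ α) (hαβ : α ≤ β) :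
    u ^ (-α) ≤ u ^ (-β) + 1 := by
  rcases le_or_gt u 1 with hu1 | hu1
  · linarith [Real.rpow_le_rpow_of_exponent_ge hu hu1 (neg_le_neg hαβ)]
  · linarith [Real.rpow_le_one_of_one_le_of_nonpos hu1.le (neg_nonpos.2 hα),
      Real.rpow_nonneg hu.le (-β)]

theorem tendsto_inv_Gamma_one_sub : Tendsto (fun α => (Real.Gamma (1 - α))⁻¹) (𝓝 0) (𝓝 1) := by
  have hΓ : ContinuousAt Real.Gamma (1 - 0) := by
    refine (Real.differentiableAt_Gamma fun m => ?_).continuousAt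
    linarith [(Nat.cast_nonneg m : (0:ℝ) ≤ m)]
  have h := (hΓ.comp (continuous_const.sub continuous_id).continuousAt).tendsto
  simp only [Function.comp_def, sub_zero, Real.Gamma_one] at h
  simpa using h.inv₀ one_ne_zero

theorem tendsto_lintegral_enorm_caputoKernel_sub_one (T : ℝ) :
    Tendsto (fun α => ∫⁻ u in Ioc 0 T, ‖caputoKernel α u - 1‖ₑ) (𝓝[>] 0) (𝓝 0) := by
  set bound : ℝ → ℝ := fun u => 2 * (u ^ (-(1/2:ℝ)) + 1) + 1
  have hbound : IntegrableOn bound (Ioc 0 T) := by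
    have := (intervalIntegral.intervalIntegrable_rpow' (a := 0) (b := T) (r := -(1/2:ℝ))
      (by norm_num)).1
    exact ((this.add (integrableOn_const measure_Ioc_lt_top.ne)).const_mul 2).add
      (integrableOn_const measure_Ioc_lt_top.ne)
  have hsmall : ∀ᶠ α in 𝓝[>] (0:ℝ), α ∈ Ioc 0 (1/2) ∧ (Real.Gamma (1 - α))⁻¹ ≤ 2 :=
    (eventually_mem_set.2 (Ioc_mem_nhdsGT (by norm_num))).and
      ((tendsto_nhdsWithin_of_tendsto_nhds tendsto_inv_Gamma_one_sub).eventually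
        (eventually_le_nhds one_lt_two))
  have hdom : ∀ᶠ α in 𝓝[>] (0:ℝ), ∀ᵐ u ∂volume.restrict (Ioc 0 T),
      ‖caputoKernel α u - 1‖ₑ ≤ ENNReal.ofReal (bound u) := by
    filter_upwards [hsmall] with α ⟨⟨hα0, hα⟩, hc⟩
    filter_upwards [ae_restrict_mem measurableSet_Ioc] with u hu
    have hc0 : 0 ≤ (Real.Gamma (1 - α))⁻¹ :=
      inv_nonneg.2 (Real.Gamma_pos_of_pos (by linarith)).le
    have hpow := Real.rpow_neg_le_rpow_neg_add_one hu.1 hα0.le hα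
    rw [Real.enorm_eq_ofReal_abs]
    refine ENNReal.ofReal_le_ofReal ((abs_sub _ _).trans ?_)
    rw [abs_one, caputoKernel, abs_of_nonneg (mul_nonneg hc0 (Real.rpow_nonneg hu.1.le _))]
    nlinarith [Real.rpow_nonneg hu.1.le (-α)]
  have hlim : ∀ᵐ u ∂volume.restrict (Ioc 0 T),
      Tendsto (fun α => ‖caputoKernel α u - 1‖ₑ) (𝓝[>] 0) (𝓝 0) := by
    filter_upwards [ae_restrict_mem measurableSet_Ioc] with u hu
    have hcont : Tendsto (fun α => caputoKernel α u) (𝓝 0) (𝓝 1) := by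
      simpa [caputoKernel] using tendsto_inv_Gamma_one_sub.mul
        ((Real.continuousAt_const_rpow hu.1.ne').comp continuousAt_neg).tendsto
    simpa using ((hcont.sub_const 1).enorm).mono_left nhdsWithin_le_nhds
  simpa using tendsto_lintegral_filter_of_dominated_convergence _
    (Eventually.of_forall fun α => by fun_prop) hdom hbound.setLIntegral_lt_top.ne hlim

section
variable {X : Type*} [NormedAddCommGroup X] [NormedSpace ℝ X]

theorem caputoDeriv_eq_integral (α : ℝ) (w' : ℝ → X) (t : ℝ) :
    caputoDeriv α w' t = ∫ s in (0:ℝ)..t, caputoKernel α (t - s) • w' s := by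
  simp only [caputoDeriv, caputoKernel, ← intervalIntegral.integral_smul, smul_smul]

theorem enorm_caputoDeriv_sub_integral_le (α : ℝ) {w' : ℝ → X} {t : ℝ} (ht : 0 ≤ t)
    (hw' : IntegrableOn w' (Ioc 0 t)) :
    ‖caputoDeriv α w' t - ∫ s in (0:ℝ)..t, w' s‖ₑ
      ≤ ∫⁻ s in Ioc 0 t, ‖caputoKernel α (t - s) - 1‖ₑ * ‖w' s‖ₑ := by
  set g := fun s => (caputoKernel α (t - s) - 1) • w' s
  simp_rw [← enorm_smul]
  by_cases hg : IntegrableOn g (Ioc 0 t)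
  · have hdiff : caputoDeriv α w' t - ∫ s in (0:ℝ)..t, w' s = ∫ s in Ioc 0 t, g s := by
      have hsplit : ∀ s, caputoKernel α (t - s) • w' s = g s + w' s := fun s => by
        simp [g, sub_smul]
      simp only [caputoDeriv_eq_integral, intervalIntegral.integral_of_le ht, hsplit]
      rw [integral_add hg hw', add_sub_cancel_right]
    rw [hdiff]
    exact enorm_integral_le_lintegral_enorm _
  · have hmeas : AEStronglyMeasurable g (volume.restrict (Ioc 0 t)) :=
      ((measurable_caputoKernel α).comp (measurable_const.sub measurable_id)
        |>.sub_const 1).aestronglyMeasurable.smul hw'.1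
    have : ¬ HasFiniteIntegral g (volume.restrict (Ioc 0 t)) := fun h => hg ⟨hmeas, h⟩
    rw [hasFiniteIntegral_iff_enorm, not_lt, top_le_iff] at this
    exact this ▸ le_top

theorem lintegral_enorm_caputoDeriv_sub_integral_rpow_le (α : ℝ) {w' : ℝ → X} {T p : ℝ}
    (hp : 1 ≤ p) (hw' : IntegrableOn w' (Ioc 0 T)) :
    ∫⁻ t in Ioc 0 T, ‖caputoDeriv α w' t - ∫ s in (0:ℝ)..t, w' s‖ₑ ^ p
      ≤ (∫⁻ u in Ioc 0 T, ‖caputoKernel α u - 1‖ₑ) ^ p * ∫⁻ s in Ioc 0 T, ‖w' s‖ₑ ^ p :=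
  calc _ ≤ ∫⁻ t in Ioc 0 T, (∫⁻ s in Ioc 0 t, ‖caputoKernel α (t - s) - 1‖ₑ * ‖w' s‖ₑ) ^ p :=
        setLIntegral_mono' measurableSet_Ioc fun t ht => ENNReal.rpow_le_rpow
          (enorm_caputoDeriv_sub_integral_le α ht.1.le (hw'.mono_set (Ioc_subset_Ioc_right ht.2)))
          (by linarith)
    _ ≤ _ := lintegral_Ioc_rpow_lintegral_Ioc_le (by fun_prop) hw'.aestronglyMeasurable.enorm hp

end

theorem caputo_tendsto_id_Lp_general {X : Type*} [NormedAddCommGroup X] [NormedSpace ℝ X]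
    (T p : ℝ) (hT : 0 < T) (hp : 1 ≤ p)
    (w w' : ℝ → X)
    (hw : ∀ t ∈ Set.Icc (0:ℝ) T, w t = w 0 + ∫ s in (0:ℝ)..t, w' s)
    (hw'i : IntervalIntegrable w' volume 0 T)
    (hw'p : IntervalIntegrable (fun t => ‖w' t‖ ^ p) volume 0 T) :
    Filter.Tendsto
      (fun α : ℝ => (∫ t in (0:ℝ)..T, ‖caputoDeriv α w' t - w t + w 0‖ ^ p) ^ (1/p))
      (nhdsWithin 0 (Set.Ioi (0:ℝ))) (nhds 0) := by
  have hp0 : 0 < p := by linarith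
  have hB : ∫⁻ s in Ioc 0 T, ‖w' s‖ₑ ^ p ≠ ∞ := by
    have h := hw'p.1.setLIntegral_lt_top
    simp only [← ENNReal.ofReal_rpow_of_nonneg (norm_nonneg _) hp0.le, ofReal_norm] at h
    exact h.ne
  have herr : ∀ α, ‖∫ t in (0:ℝ)..T, ‖caputoDeriv α w' t - w t + w 0‖ ^ p‖ₑ
      ≤ (∫⁻ u in Ioc 0 T, ‖caputoKernel α u - 1‖ₑ) ^ p * ∫⁻ s in Ioc 0 T, ‖w' s‖ₑ ^ p := fun α =>
    calc _ ≤ ∫⁻ t in Ioc 0 T, ‖‖caputoDeriv α w' t - w t + w 0‖ ^ p‖ₑ := by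
          rw [intervalIntegral.integral_of_le hT.le]; exact enorm_integral_le_lintegral_enorm _
      _ = ∫⁻ t in Ioc 0 T, ‖caputoDeriv α w' t - ∫ s in (0:ℝ)..t, w' s‖ₑ ^ p := by
          refine setLIntegral_congr_fun measurableSet_Ioc fun t ht => ?_
          rw [hw t (Ioc_subset_Icc_self ht), Real.enorm_rpow_of_nonneg (norm_nonneg _) hp0.le,
            enorm_norm]
          congr 2
          abel
      _ ≤ _ := lintegral_enorm_caputoDeriv_sub_integral_rpow_le α hp hw'i.1
  have hbound : Tendsto (fun α => (∫⁻ u in Ioc 0 T, ‖caputoKernel α u - 1‖ₑ) ^ p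
      * ∫⁻ s in Ioc 0 T, ‖w' s‖ₑ ^ p) (𝓝[>] 0) (𝓝 0) := by
    simpa [ENNReal.zero_rpow_of_pos hp0] using ENNReal.Tendsto.mul_const
      (((ENNReal.continuous_rpow_const (y := p)).tendsto 0).comp
        (tendsto_lintegral_enorm_caputoKernel_sub_one T)) (Or.inr hB)
  have herr_lim := tendsto_zero_iff_enorm_tendsto_zero.2
    (tendsto_of_tendsto_of_tendsto_of_le_of_le tendsto_const_nhds hbound (fun _ => zero_le) herr)
  simpa [Real.zero_rpow (inv_ne_zero hp0.ne')] using
    herr_lim.rpow_const (p := 1 / p) (Or.inr (by positivity))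

/-- For `w ∈ W^{1,p}(0,T;X)` with `1 ≤ p < ∞`, the Caputo derivative `D_t^α w`
converges to `w - w(0)` in `L^p(0,T;X)` as `α → 0⁺`. -/
theorem caputo_tendsto_id_Lp {X : Type*} [NormedAddCommGroup X] [NormedSpace ℝ X]
    [CompleteSpace X] (T p : ℝ) (hT : 0 < T) (hp : 1 ≤ p)
    (w w' : ℝ → X)
    (hw : ∀ t ∈ Set.Icc (0:ℝ) T, w t = w 0 + ∫ s in (0:ℝ)..t, w' s)
    (hw'i : IntervalIntegrable w' volume 0 T)
    (hw'p : IntervalIntegrable (fun t => ‖w' t‖ ^ p) volume 0 T) :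
    Filter.Tendsto
      (fun α : ℝ => (∫ t in (0:ℝ)..T, ‖caputoDeriv α w' t - w t + w 0‖ ^ p) ^ (1/p))
      (nhdsWithin 0 (Set.Ioi (0:ℝ))) (nhds 0) :=
  caputo_tendsto_id_Lp_general T p hT hp w w' hw hw'i hw'p
end
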